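/- Let Γ be an even Artin graph with Artin group G, A ⊆ V, g ∈ G. Suppose G_A ∪ gG_Ag^{-1} is not contained in any proper parabolic subgroup of G, and there exists x ∈ V \ A with A ⊄ lk(x). Then G_A ∩ gG_Ag^{-1} is contained in a parabolic subgroup conjugate to G_B for some proper subset B ⊊ A. -/

import Mathlib

/-- An Artin graph: a simplicial graph with even/arbitrary labels; `m u v = 0`
means `u` and `v` are not joined by an edge, otherwise `m u v ≥ 2` is the label. -/
structure ArtinGraph (V : Type) where
  m : V → V → ℕ
  symm : ∀ u v, m u v = m v u
  loopless : ∀ v, m v v = 0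
  ne_one : ∀ u v, m u v ≠ 1

namespace ArtinGraph

variable {V : Type}

/-- `word u v n` is the prefix of length `n` of the alternating word `uvuv…`. -/
def word : V → V → ℕ → FreeGroup V
  | _, _, 0 => 1
  | u, v, n + 1 => FreeGroup.of u * word v u n

/-- The Artin relations of the graph. -/
def rels (Γ : ArtinGraph V) : Set (FreeGroup V) :=
  {r | ∃ u v, Γ.m u v ≠ 0 ∧ r = word u v (Γ.m u v) * (word v u (Γ.m u v))⁻¹}

/-- The Artin group of an Artin graph. -/
def ArtinGroup (Γ : ArtinGraph V) : Type := PresentedGroup Γ.rels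

instance (Γ : ArtinGraph V) : Group Γ.ArtinGroup :=
  inferInstanceAs (Group (PresentedGroup Γ.rels))

/-- The generator of the Artin group corresponding to a vertex. -/
def gen (Γ : ArtinGraph V) (v : V) : Γ.ArtinGroup := PresentedGroup.of v

/-- The standard parabolic subgroup on a set `S` of vertices. -/
def std (Γ : ArtinGraph V) (S : Set V) : Subgroup Γ.ArtinGroup :=
  Subgroup.closure (Γ.gen '' S)

/-- The conjugate `g H g⁻¹` of a subgroup. -/
def conjP {G : Type*} [Group G] (g : G) (H : Subgroup G) : Subgroup G :=
  H.map (MulAut.conj g).toMonoidHom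

/-- A parabolic subgroup is a conjugate of a standard parabolic subgroup. -/
def IsParabolic (Γ : ArtinGraph V) (P : Subgroup Γ.ArtinGroup) : Prop :=
  ∃ (S : Set V) (g : Γ.ArtinGroup), P = conjP g (Γ.std S)

/-- An Artin graph is even if all labels are even. -/
def IsEven (Γ : ArtinGraph V) : Prop := ∀ u v, Even (Γ.m u v)

/-- The FC condition for even Artin graphs: in every triangle at least two of
the three labels are equal to `2`. -/
def IsFC (Γ : ArtinGraph V) : Prop :=
  ∀ u v w, Γ.m u v ≠ 0 → Γ.m v w ≠ 0 → Γ.m w u ≠ 0 →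
    (Γ.m u v = 2 ∧ Γ.m v w = 2) ∨ (Γ.m v w = 2 ∧ Γ.m w u = 2) ∨
      (Γ.m u v = 2 ∧ Γ.m w u = 2)

/-- The link of a vertex. -/
def lk (Γ : ArtinGraph V) (x : V) : Set V := {u | Γ.m x u ≠ 0}

/-- The star of a vertex. -/
def star (Γ : ArtinGraph V) (x : V) : Set V := insert x (Γ.lk x)

end ArtinGraph

/-!
Fix `x ∉ A` with `A ⊄ lk(x)`. Then `G_A ≤ G_{V∖{x}}`, and `G` is the amalgam
`G_{st(x)} *_{G_{lk(x)}} G_{V∖{x}}`. If `g ∈ G_{V∖{x}}`, then `G_A ∪ gG_Ag⁻¹` lies in the proper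
parabolic subgroup `G_{V∖{x}}`. Otherwise the vertices `G_{V∖{x}}` and `gG_{V∖{x}}` of the
Bass–Serre tree are distinct, so `G_A ∩ gG_Ag⁻¹` fixes an edge between them and lies in a conjugate
`hG_{lk(x)}h⁻¹`. Because `Γ` is even, killing the generators outside `A` is a retraction
`ρ : G → G_A`; applying it puts the intersection into `ρ(h) G_{A ∩ lk(x)} ρ(h)⁻¹`, and
`A ∩ lk(x) ⊊ A`.
-/

namespace ArtinGraph

section Conjugation

variable {G : Type*} [Group G]

theorem mem_conjP {g z : G} {H : Subgroup G} : z ∈ conjP g H ↔ ∃ y ∈ H, g * y * g⁻¹ = z := by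
  simp [conjP, MulAut.conj_apply]

theorem conjP_one (H : Subgroup G) : conjP 1 H = H := by
  ext z
  simp [mem_conjP]

theorem conjP_mono {g : G} {H K : Subgroup G} (h : H ≤ K) : conjP g H ≤ conjP g K :=
  Subgroup.map_mono h

theorem conjP_eq_self_of_mem {g : G} {H : Subgroup G} (hg : g ∈ H) : conjP g H = H :=
  Subgroup.conj_smul_eq_self_of_mem hg

end Conjugation

end ArtinGraph

open Monoid CoprodI ArtinGraph

namespace Monoid.PushoutI

variable {ι : Type*} {G : ι → Type*} {H : Type*} [∀ i, Group (G i)] [Group H]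
  {φ : ∀ i, H →* G i}

theorem Reduced.map_fst_eq_of_prod_eq (hφ : ∀ i, Function.Injective (φ i)) {w₁ w₂ : Word G}
    (h₁ : Reduced φ w₁) (h₂ : Reduced φ w₂)
    (h : ofCoprodI (φ := φ) w₁.prod = ofCoprodI w₂.prod) :
    w₁.toList.map Sigma.fst = w₂.toList.map Sigma.fst := by
  obtain ⟨d⟩ := NormalWord.transversal_nonempty φ hφ
  obtain ⟨v₁, hv₁, hm₁⟩ := h₁.exists_normalWord_prod_eq d
  obtain ⟨v₂, hv₂, hm₂⟩ := h₂.exists_normalWord_prod_eq d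
  rw [← hm₁, ← hm₂, NormalWord.prod_injective (hv₁.trans (h.trans hv₂.symm))]

theorem Reduced.prod_notMem_range_of (hφ : ∀ i, Function.Injective (φ i)) {w : Word G}
    (hw : Reduced φ w) (hlen : 2 ≤ w.toList.length) (k : ι) :
    ofCoprodI (φ := φ) w.prod ∉ (of (φ := φ) k).range := by
  rintro ⟨a, ha⟩
  by_cases hak : a ∈ (φ k).range
  · obtain ⟨y, rfl⟩ := hak
    rw [of_apply_eq_base] at ha
    have := hw.eq_empty_of_mem_range hφ ⟨y, ha⟩
    simp [this, Word.empty] at hlen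
  · have ha1 : a ≠ 1 := fun h => hak (h ▸ one_mem _)
    let s : Word G := .cons a .empty (by simp [Word.fstIdx, Word.empty]) ha1
    have hs : Reduced φ s := by simpa [Reduced, s, Word.empty] using hak
    have := congrArg List.length
      (hs.map_fst_eq_of_prod_eq hφ hw (by simpa [s, Word.empty, Word.prod] using ha))
    simp [s, Word.empty] at this
    omega

theorem reduced_append {i j k l : ι} {w₁ : NeWord G i j} {hne : j ≠ k} {w₂ : NeWord G k l} :
    Reduced φ (NeWord.append w₁ hne w₂).toWord ↔ Reduced φ w₁.toWord ∧ Reduced φ w₂.toWord := by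
  simp [Reduced, NeWord.toWord, or_imp, forall_and]

theorem reduced_singleton {i : ι} {a : G i} {ha : a ≠ 1} :
    Reduced φ (NeWord.singleton a ha).toWord ↔ a ∉ (φ i).range := by
  simp [Reduced, NeWord.toWord]

theorem Reduced.neWord_inv {i j : ι} {w : NeWord G i j} (hw : Reduced φ w.toWord) :
    Reduced φ w.inv.toWord := by
  induction w with
  | singleton a ha => simpa [NeWord.inv, reduced_singleton] using hw
  | append w₁ hne w₂ ih₁ ih₂ =>
    rw [reduced_append] at hw
    exact reduced_append.2 ⟨ih₂ hw.2, ih₁ hw.1⟩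

-- `w⁻¹ a w` is itself a reduced word, of length at least three.
theorem conj_notMem_range_of (hφ : ∀ i, Function.Injective (φ i)) {i j k : ι}
    {w : NeWord G i j} (hw : Reduced φ w.toWord) (hik : i ≠ k) {a : G k}
    (ha : a ∉ (φ k).range) :
    (ofCoprodI (φ := φ) w.prod)⁻¹ * of k a * ofCoprodI w.prod ∉ (of (φ := φ) k).range := by
  have ha1 : a ≠ 1 := fun h => ha (h ▸ one_mem _)
  let c := NeWord.append (NeWord.append w.inv hik (NeWord.singleton a ha1)) hik.symm w
  have hc : Reduced φ c.toWord :=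
    reduced_append.2 ⟨reduced_append.2 ⟨hw.neWord_inv, reduced_singleton.2 ha⟩, hw⟩
  have hlen : 2 ≤ c.toWord.toList.length := by
    have := List.length_pos_iff.2 w.toList_ne_nil
    simp only [c, NeWord.toWord, NeWord.toList, List.length_append, List.length_singleton]
    omega
  have hprod : c.prod = w.prod⁻¹ * CoprodI.of a * w.prod := by simp [c]
  have := hc.prod_notMem_range_of hφ hlen k
  rwa [← NeWord.prod, hprod, map_mul, map_mul, map_inv, ofCoprodI_of] at this

theorem NormalWord.reduced {d : NormalWord.Transversal φ} (v : NormalWord d) :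
    Reduced φ v.toWord := by
  rintro ⟨i, a⟩ hv ⟨y, hy⟩
  have h := (d.compl i).1 (a₁ := (⟨a, y, hy⟩, ⟨1, d.one_mem i⟩))
    (a₂ := (⟨1, one_mem _⟩, ⟨a, v.normalized i a hv⟩)) (by simp)
  exact v.ne_one _ hv (congrArg (fun p => (p.1 : G i)) h)

theorem exists_mem_range_mul_neWord (hφ : ∀ i, Function.Injective (φ i)) (k : ι)
    (g : PushoutI φ) :
    ∃ m ∈ (of (φ := φ) k).range, g = m ∨ ∃ (i j : ι) (w : NeWord G i j),
      i ≠ k ∧ Reduced φ w.toWord ∧ g = m * ofCoprodI w.prod := by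
  classical
  obtain ⟨d⟩ := NormalWord.transversal_nonempty φ hφ
  set v := NormalWord.equiv (d := d) g
  set p := Word.equivPair k v.toWord
  have hprod : Word.prod v.toWord = CoprodI.of p.head * p.tail.prod := by
    rw [← Word.prod_rcons, ← Word.equivPair_symm, Equiv.symm_apply_apply]
  have htail : Reduced φ p.tail := fun ⟨_, a⟩ ha =>
    v.reduced _ (Word.mem_of_mem_equivPair_tail a ha)
  have hg : g = of k (φ k v.head * p.head) * ofCoprodI p.tail.prod := by
    have hv : v.prod = g := NormalWord.equiv.left_inv g
    rw [← hv, NormalWord.prod, hprod, map_mul, ofCoprodI_of, ← mul_assoc, ← of_apply_eq_base φ k,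
      ← map_mul]
  refine ⟨of k (φ k v.head * p.head), ⟨_, rfl⟩, ?_⟩
  by_cases hemp : p.tail = Word.empty
  · left
    rw [hg, hemp, Word.prod_empty, map_one, mul_one]
  · right
    obtain ⟨i, j, w, hw⟩ := NeWord.of_word p.tail hemp
    refine ⟨i, j, w, fun hik => p.fstIdx_ne ?_, hw ▸ htail, by rw [hg, NeWord.prod, hw]⟩
    rw [← hw, ← hik]
    simp [Word.fstIdx, NeWord.toWord]

theorem exists_range_inf_conjP_le (hφ : ∀ i, Function.Injective (φ i)) {k : ι}
    {g : PushoutI φ} (hg : g ∉ (of (φ := φ) k).range) :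
    ∃ h, (of k).range ⊓ conjP g (of (φ := φ) k).range ≤ conjP h (base φ).range := by
  obtain ⟨m, hm, rfl | ⟨i, j, w, hik, hw, rfl⟩⟩ := exists_mem_range_mul_neWord hφ k g
  · exact absurd hm hg
  refine ⟨m, fun z ⟨hz, hzg⟩ => mem_conjP.2 ⟨m⁻¹ * z * m, ?_, by group⟩⟩
  obtain ⟨y, hy, hyz⟩ := mem_conjP.1 hzg
  obtain ⟨a, ha⟩ : m⁻¹ * z * m ∈ (of k).range := mul_mem (mul_mem (inv_mem hm) hz) hm
  rw [← ha]
  by_cases haφ : a ∈ (φ k).range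
  · obtain ⟨b, rfl⟩ := haφ
    exact ⟨b, (of_apply_eq_base φ k b).symm⟩
  refine absurd ?_ (conj_notMem_range_of hφ hw hik haφ)
  rw [ha, ← hyz]
  convert hy using 1
  group

end Monoid.PushoutI

namespace ArtinGraph

def altProd {M : Type*} [Monoid M] : M → M → ℕ → M
  | _, _, 0 => 1
  | a, b, n + 1 => a * altProd b a n

theorem map_altProd {M N : Type*} [Monoid M] [Monoid N] (F : M →* N) (a b : M) (n : ℕ) :
    F (altProd a b n) = altProd (F a) (F b) n := by
  induction n generalizing a b with
  | zero => simp [altProd]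
  | succ n ih => simp [altProd, ih]

theorem altProd_two_mul {M : Type*} [Monoid M] (a b : M) (k : ℕ) :
    altProd a b (2 * k) = (a * b) ^ k := by
  induction k with
  | zero => simp [altProd]
  | succ k ih => rw [Nat.mul_succ, pow_succ', ← ih, mul_assoc]; rfl

variable {V : Type} (Γ : ArtinGraph V)

theorem word_eq_altProd (u v : V) (n : ℕ) :
    word u v n = altProd (FreeGroup.of u) (FreeGroup.of v) n := by
  induction n generalizing u v with
  | zero => rfl
  | succ n ih => simp [word, altProd, ih]

theorem gen_altProd {u v : V} (huv : Γ.m u v ≠ 0) :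
    altProd (Γ.gen u) (Γ.gen v) (Γ.m u v) = altProd (Γ.gen v) (Γ.gen u) (Γ.m u v) := by
  have := PresentedGroup.mk_eq_mk_of_mul_inv_mem (rels := Γ.rels) ⟨u, v, huv, rfl⟩
  rwa [word_eq_altProd, word_eq_altProd, map_altProd, map_altProd] at this

def lift {G : Type*} [Group G] (f : V → G)
    (hf : ∀ u v, Γ.m u v ≠ 0 → altProd (f u) (f v) (Γ.m u v) = altProd (f v) (f u) (Γ.m u v)) :
    Γ.ArtinGroup →* G :=
  PresentedGroup.toGroup (f := f) <| by
    rintro _ ⟨u, v, huv, rfl⟩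
    rw [map_mul, map_inv, mul_inv_eq_one, word_eq_altProd, word_eq_altProd, map_altProd,
      map_altProd, FreeGroup.lift_apply_of, FreeGroup.lift_apply_of]
    exact hf u v huv

theorem lift_gen {G : Type*} [Group G] (f : V → G) (hf) (v : V) :
    Γ.lift f hf (Γ.gen v) = f v :=
  PresentedGroup.toGroup.of _

theorem gen_mem_std {S : Set V} {v : V} (hv : v ∈ S) : Γ.gen v ∈ Γ.std S :=
  Subgroup.subset_closure ⟨v, hv, rfl⟩

theorem std_le {S : Set V} {K : Subgroup Γ.ArtinGroup} (h : ∀ v ∈ S, Γ.gen v ∈ K) :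
    Γ.std S ≤ K :=
  (Subgroup.closure_le K).2 <| by rintro _ ⟨v, hv, rfl⟩; exact h v hv

theorem std_mono {S T : Set V} (h : S ⊆ T) : Γ.std S ≤ Γ.std T :=
  Subgroup.closure_mono (Set.image_mono h)

section Retraction

variable (hEven : Γ.IsEven) (S : Set V)

-- Once `u` or `v` is sent to `1`, both sides of the relation `(uv)^k = (vu)^k` become the same
-- power; this is where evenness is needed.
open scoped Classical in
noncomputable def retraction : Γ.ArtinGroup →* Γ.ArtinGroup :=
  Γ.lift (fun v => if v ∈ S then Γ.gen v else 1) fun u v huv => by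
    obtain ⟨k, hk⟩ := hEven u v
    rw [hk, ← two_mul, altProd_two_mul, altProd_two_mul]
    by_cases hu : u ∈ S <;> by_cases hv : v ∈ S <;> simp only [hu, hv, if_true, if_false,
      mul_one, one_mul]
    simpa [hk, ← two_mul, altProd_two_mul] using Γ.gen_altProd huv

open scoped Classical in
theorem retraction_gen (v : V) :
    Γ.retraction hEven S (Γ.gen v) = if v ∈ S then Γ.gen v else 1 :=
  Γ.lift_gen _ _ v

theorem retraction_eq_self {z : Γ.ArtinGroup} (hz : z ∈ Γ.std S) :
    Γ.retraction hEven S z = z :=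
  MonoidHom.eqOn_closure (g := MonoidHom.id _)
    (by rintro _ ⟨v, hv, rfl⟩; simp [retraction_gen, hv]) hz

theorem retraction_mem_std {T : Set V} {z : Γ.ArtinGroup} (hz : z ∈ Γ.std T) :
    Γ.retraction hEven S z ∈ Γ.std (S ∩ T) :=
  Γ.std_le (K := (Γ.std (S ∩ T)).comap _) (fun v hv => by
    by_cases hvS : v ∈ S
    · simpa [retraction_gen, hvS] using Γ.gen_mem_std (S := S ∩ T) ⟨hvS, hv⟩
    · simp [retraction_gen, hvS]) hz

theorem le_conjP_retraction {K : Subgroup Γ.ArtinGroup} {T : Set V} {h : Γ.ArtinGroup}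
    (hS : K ≤ Γ.std S) (hT : K ≤ conjP h (Γ.std T)) :
    K ≤ conjP (Γ.retraction hEven S h) (Γ.std (S ∩ T)) := fun z hz => by
  obtain ⟨y, hy, hyz⟩ := mem_conjP.1 (hT hz)
  refine mem_conjP.2 ⟨_, Γ.retraction_mem_std hEven S hy, ?_⟩
  rw [← map_inv, ← map_mul, ← map_mul, hyz, Γ.retraction_eq_self hEven S (hS hz)]

end Retraction

section Splitting

open Monoid

variable (x : V)

-- The factors `G_{st(x)}` (`true`) and `G_{V∖{x}}` (`false`) of the splitting of `G` at `x`.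
def side : Bool → Set V
  | true => Γ.star x
  | false => {x}ᶜ

theorem lk_subset_side : ∀ b, Γ.lk x ⊆ Γ.side x b
  | true => Set.subset_insert _ _
  | false => fun u hu (hux : u = x) => hu (hux ▸ Γ.loopless x)

theorem exists_mem_side (v : V) : ∃ b, v ∈ Γ.side x b := by
  by_cases hv : v = x
  · exact ⟨true, hv ▸ Set.mem_insert _ _⟩
  · exact ⟨false, hv⟩

theorem mem_lk_of_mem_side_of_ne {b b' : Bool} {v : V} (hv : v ∈ Γ.side x b)
    (hv' : v ∈ Γ.side x b') (hbb' : b ≠ b') : v ∈ Γ.lk x := by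
  cases b <;> cases b' <;> simp only [ne_eq, not_true_eq_false] at hbb'
  · exact (Set.mem_insert_iff.1 hv').resolve_left hv
  · exact (Set.mem_insert_iff.1 hv).resolve_left hv'

theorem exists_mem_side_of_adj {u v : V} (huv : Γ.m u v ≠ 0) :
    ∃ b, u ∈ Γ.side x b ∧ v ∈ Γ.side x b := by
  by_cases hu : u = x
  · subst hu
    exact ⟨true, Set.mem_insert _ _, Set.mem_insert_of_mem _ huv⟩
  by_cases hv : v = x
  · subst hv
    exact ⟨true, Set.mem_insert_of_mem _ (by rwa [lk, Set.mem_ofPred_eq, Γ.symm]),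
      Set.mem_insert _ _⟩
  exact ⟨false, hu, hv⟩

def sideIncl (b : Bool) : Γ.std (Γ.lk x) →* Γ.std (Γ.side x b) :=
  Subgroup.inclusion (Γ.std_mono (Γ.lk_subset_side x b))

theorem sideIncl_injective (b : Bool) : Function.Injective (Γ.sideIncl x b) :=
  Subgroup.inclusion_injective _

noncomputable def sideGen {b : Bool} {v : V} (hv : v ∈ Γ.side x b) :
    PushoutI (Γ.sideIncl x) :=
  PushoutI.of b ⟨Γ.gen v, Γ.gen_mem_std hv⟩

theorem sideGen_eq_base {b : Bool} {v : V} (hv : v ∈ Γ.side x b) (hlk : v ∈ Γ.lk x) :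
    Γ.sideGen x hv = PushoutI.base _ ⟨Γ.gen v, Γ.gen_mem_std hlk⟩ := by
  rw [← PushoutI.of_apply_eq_base _ b]
  rfl

theorem sideGen_eq {b b' : Bool} {v : V} (hv : v ∈ Γ.side x b) (hv' : v ∈ Γ.side x b') :
    Γ.sideGen x hv = Γ.sideGen x hv' := by
  by_cases hbb' : b = b'
  · subst hbb'
    rfl
  · have hlk := Γ.mem_lk_of_mem_side_of_ne x hv hv' hbb'
    rw [Γ.sideGen_eq_base x hv hlk, Γ.sideGen_eq_base x hv' hlk]

noncomputable def toSplitting : Γ.ArtinGroup →* PushoutI (Γ.sideIncl x) :=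
  Γ.lift (fun v => Γ.sideGen x (Γ.exists_mem_side x v).choose_spec) fun u v huv => by
    obtain ⟨b, hu, hv⟩ := Γ.exists_mem_side_of_adj x huv
    rw [Γ.sideGen_eq x _ hu, Γ.sideGen_eq x _ hv]
    simp only [sideGen, ← map_altProd]
    congr 1
    ext
    have hsub := map_altProd (Γ.std (Γ.side x b)).subtype
    simp only [Subgroup.coe_subtype] at hsub
    rw [hsub, hsub]
    exact Γ.gen_altProd huv

noncomputable def fromSplitting : PushoutI (Γ.sideIncl x) →* Γ.ArtinGroup :=
  PushoutI.lift (fun b => (Γ.std (Γ.side x b)).subtype) (Γ.std (Γ.lk x)).subtype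
    fun _ => rfl

theorem fromSplitting_of (b : Bool) (s : Γ.std (Γ.side x b)) :
    Γ.fromSplitting x (PushoutI.of b s) = s :=
  PushoutI.lift_of ..

theorem fromSplitting_base (s : Γ.std (Γ.lk x)) :
    Γ.fromSplitting x (PushoutI.base _ s) = s :=
  PushoutI.lift_base ..

theorem fromSplitting_toSplitting (z : Γ.ArtinGroup) :
    Γ.fromSplitting x (Γ.toSplitting x z) = z := by
  suffices (Γ.fromSplitting x).comp (Γ.toSplitting x) = MonoidHom.id _ from
    DFunLike.congr_fun this z
  refine PresentedGroup.ext fun v => ?_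
  show Γ.fromSplitting x (Γ.toSplitting x (Γ.gen v)) = Γ.gen v
  rw [toSplitting, lift_gen, sideGen, fromSplitting_of]

theorem toSplitting_of_mem {b : Bool} {z : Γ.ArtinGroup} (hz : z ∈ Γ.std (Γ.side x b)) :
    Γ.toSplitting x z = PushoutI.of b ⟨z, hz⟩ := by
  induction hz using Subgroup.closure_induction with
  | mem _ hg =>
    obtain ⟨v, hv, rfl⟩ := hg
    exact (Γ.lift_gen _ _ v).trans (Γ.sideGen_eq x _ hv)
  | one => exact (map_one _).trans (map_one _).symm
  | mul a b _ _ ha hb => rw [map_mul, ha, hb, ← map_mul]; rfl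
  | inv a _ ha => rw [map_inv, ha, ← map_inv]; rfl

theorem exists_std_compl_inf_conjP_le {g : Γ.ArtinGroup} (hg : g ∉ Γ.std {x}ᶜ) :
    ∃ h, Γ.std {x}ᶜ ⊓ conjP g (Γ.std {x}ᶜ) ≤ conjP h (Γ.std (Γ.lk x)) := by
  have hM : ∀ {z}, z ∈ Γ.std {x}ᶜ → Γ.toSplitting x z ∈ (PushoutI.of false).range :=
    fun hz => ⟨⟨_, hz⟩, (Γ.toSplitting_of_mem x (b := false) hz).symm⟩
  have hgM : Γ.toSplitting x g ∉ (PushoutI.of false).range := by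
    rintro ⟨s, hs⟩
    apply hg
    rw [← Γ.fromSplitting_toSplitting x g, ← hs, fromSplitting_of]
    exact s.2
  obtain ⟨h, hh⟩ := PushoutI.exists_range_inf_conjP_le (Γ.sideIncl_injective x) hgM
  refine ⟨Γ.fromSplitting x h, fun z ⟨hz, hzg⟩ => ?_⟩
  obtain ⟨y, hy, hyz⟩ := mem_conjP.1 hzg
  have hzy : Γ.toSplitting x z ∈ conjP (Γ.toSplitting x g) (PushoutI.of false).range :=
    mem_conjP.2 ⟨_, hM hy, by rw [← hyz, map_mul, map_mul, map_inv]⟩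
  obtain ⟨_, ⟨k, rfl⟩, hkz⟩ := mem_conjP.1 (hh ⟨hM hz, hzy⟩)
  refine mem_conjP.2 ⟨k, k.2, ?_⟩
  have := congrArg (Γ.fromSplitting x) hkz
  rwa [map_mul, map_mul, map_inv, fromSplitting_base, fromSplitting_toSplitting] at this

end Splitting

end ArtinGraph

open ArtinGraph in
/-- if `G_A ∪ gG_Ag⁻¹` is not contained in any proper parabolic
subgroup and some `x ∈ V \ A` has `A ⊄ lk(x)`, then `G_A ∩ gG_Ag⁻¹` lies in a
parabolic subgroup over a proper subset of `A`. -/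
theorem stmt7 {V : Type} (Γ : ArtinGraph V) (hEven : Γ.IsEven) (A : Set V)
    (g : Γ.ArtinGroup)
    (hproper : ¬ ∃ (S : Set V) (t : Γ.ArtinGroup), S ≠ Set.univ ∧
        Γ.std A ≤ conjP t (Γ.std S) ∧ conjP g (Γ.std A) ≤ conjP t (Γ.std S))
    (hx : ∃ x ∈ Set.univ \ A, ¬ A ⊆ Γ.lk x) :
    ∃ B : Set V, B ⊂ A ∧ ∃ d : Γ.ArtinGroup,
      Γ.std A ⊓ conjP g (Γ.std A) ≤ conjP d (Γ.std B) := by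
  obtain ⟨x, ⟨-, hxA⟩, hAlk⟩ := hx
  have hA : Γ.std A ≤ Γ.std {x}ᶜ := Γ.std_mono fun a ha hax => hxA (hax ▸ ha)
  by_cases hg : g ∈ Γ.std {x}ᶜ
  · refine absurd ⟨{x}ᶜ, 1, Set.compl_ne_univ.2 (Set.singleton_nonempty x), ?_, ?_⟩ hproper
    · rwa [conjP_one]
    · rw [conjP_one, ← conjP_eq_self_of_mem hg]
      exact conjP_mono hA
  obtain ⟨h, hh⟩ := Γ.exists_std_compl_inf_conjP_le x hg
  exact ⟨A ∩ Γ.lk x, Set.inter_ssubset_left_iff.2 hAlk, Γ.retraction hEven A h,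
    Γ.le_conjP_retraction hEven A inf_le_left ((inf_le_inf hA (conjP_mono hA)).trans hh)⟩
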